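/- arXiv:1902.09540 — 3 statements merged into one kernel-verified Lean document; each statement's English description precedes it below -/
import Mathlib

section
/- Let $\beta > -1$, $r \ge 1$, and let $p_n(x;\beta) = \sum_{k=0}^n \binom{n}{k} \frac{(-1)^{n-k}}{\Gamma(\frac{\beta+k}{r}+1)} x^k$. Then all zeros of $p_n(\cdot;\beta)$ are simple and lie in the open interval $(0,\infty)$. -/
/-
The coefficients of `p_n` are such that `∫₀^∞ p_n(x) x^(rj+r-1) x^β e^(-x^r) dx` is, up to the
factor `1/r`, the `n`-th finite difference at `0` of `k ↦ Γ((β+k)/r+1+j) / Γ((β+k)/r+1)`, a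
polynomial of degree `j` in `k`; so it vanishes for `j < n`, i.e. `p_n` is orthogonal to
`x^(r-1) Q(x^r)` for every polynomial `Q` of degree `< n`. If `p_n` changed sign at fewer than
`n` points `xᵢ > 0`, then for `Q = ∏ (X - xᵢ^r)` the function `p_n(x) x^(r-1) Q(x^r)` would have
constant sign on `(0, ∞)` without vanishing identically, so its weighted integral could not be
`0`. Hence `p_n` has `n` positive roots of odd multiplicity; as its degree is `n`, these are all
of its roots and they are simple.
-/

/-- The polynomial `p_n(X; β)` (as a `Polynomial ℝ`) for the Laguerre-Angelesco
polynomials on an `r`-star. -/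
noncomputable def laPolynomial (r n : ℕ) (β : ℝ) : Polynomial ℝ :=
  ∑ k ∈ Finset.range (n + 1),
    Polynomial.C ((n.choose k : ℝ) * (-1) ^ (n - k) / Real.Gamma ((β + k) / r + 1)) *
      Polynomial.X ^ k

open Polynomial Finset Real MeasureTheory Set

theorem Polynomial.alternating_sum_choose_mul_eval_eq_zero {R : Type*} [CommRing R] {P : R[X]}
    {n : ℕ} (hP : P.natDegree < n) :
    ∑ k ∈ range (n + 1), (-1 : R) ^ (n - k) * n.choose k * P.eval (k : R) = 0 := by
  have h := congrFun (fwdDiff_iter_eq_zero_of_degree_lt hP) 0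
  rw [fwdDiff_iter_eq_sum_shift] at h
  simpa [zsmul_eq_mul] using h

theorem Real.Gamma_add_nat_eq_mul_ascPochhammer {z : ℝ} (hz : ∀ k : ℕ, z ≠ -k) (j : ℕ) :
    Gamma (z + j) = Gamma z * (ascPochhammer ℝ j).eval z := by
  induction j with
  | zero => simp
  | succ j ih =>
    have hzj : z + j ≠ 0 := fun h => hz j (by linarith)
    rw [Nat.cast_succ, ← add_assoc, Gamma_add_one hzj, ih, ascPochhammer_succ_eval]
    ring

theorem eval_mul_eval_nonneg_of_even_rootMultiplicity {g : ℝ[X]}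
    (hg : ∀ z, 0 < z → Even (g.rootMultiplicity z)) {x y : ℝ} (hx : 0 < x) (hy : 0 < y) :
    0 ≤ g.eval x * g.eval y := by
  induction hn : g.natDegree using Nat.strong_induction_on generalizing g with
  | _ n ih =>
  rcases eq_or_ne g 0 with rfl | hg0
  · simp
  by_cases hroot : ∃ ρ, 0 < ρ ∧ g.IsRoot ρ
  · obtain ⟨ρ, hρ, hgρ⟩ := hroot
    obtain ⟨g₁, hfac, hg₁⟩ := g.exists_eq_pow_rootMultiplicity_mul_and_not_dvd hg0 ρ
    set d := g.rootMultiplicity ρ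
    have hd : 0 < d := (rootMultiplicity_pos hg0).mpr hgρ
    have hg₁0 : g₁ ≠ 0 := by rintro rfl; simp at hfac; exact hg0 hfac
    have hdeg : g₁.natDegree < n := by
      rw [← hn, hfac, natDegree_mul (pow_ne_zero _ (X_sub_C_ne_zero ρ)) hg₁0, natDegree_pow,
        natDegree_X_sub_C]
      omega
    have hg₁even : ∀ z, 0 < z → Even (g₁.rootMultiplicity z) := by
      intro z hz
      have hsplit := hg z hz
      rw [hfac, rootMultiplicity_mul (hfac ▸ hg0)] at hsplit
      rcases eq_or_ne z ρ with rfl | hzρ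
      · rw [rootMultiplicity_eq_zero fun h => hg₁ (dvd_iff_isRoot.mpr h)]
        exact .zero
      · rwa [rootMultiplicity_eq_zero (by simp [sub_ne_zero.mpr hzρ]), zero_add] at hsplit
    have hdeven : Even d := hg ρ hρ
    have key := ih _ hdeg hg₁even rfl
    rw [hfac]
    simp only [eval_mul, eval_pow, eval_sub, eval_X, eval_C]
    calc (0 : ℝ) ≤ ((x - ρ) ^ d * (y - ρ) ^ d) * (g₁.eval x * g₁.eval y) :=
          mul_nonneg (mul_nonneg (hdeven.pow_nonneg _) (hdeven.pow_nonneg _)) key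
      _ = _ := by ring
  · push Not at hroot
    by_contra! hneg
    have h0 : (0 : ℝ) ∈ uIcc (g.eval x) (g.eval y) := by
      rw [Set.mem_uIcc]
      rcases mul_neg_iff.mp hneg with h | h <;> [right; left] <;> exact ⟨by linarith, by linarith⟩
    obtain ⟨z, hz, hgz⟩ := intermediate_value_uIcc g.continuous.continuousOn h0
    exact hroot z (ordConnected_Ioi.uIcc_subset hx hy hz) hgz

theorem setIntegral_pos_of_nonneg_of_ne_zero_off_countable {α : Type*} [MeasurableSpace α]
    {μ : Measure α} [NullSingletonClass μ] {f : α → ℝ} {t s : Set α}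
    (ht : MeasurableSet t) (ht0 : 0 < μ t) (hf : IntegrableOn f t μ) (hnn : ∀ x ∈ t, 0 ≤ f x)
    (hs : s.Countable) (hne : ∀ x ∈ t, x ∉ s → f x ≠ 0) : 0 < ∫ x in t, f x ∂μ := by
  rw [setIntegral_pos_iff_support_of_nonneg_ae (ae_restrict_of_forall_mem ht hnn) hf]
  calc 0 < μ t := ht0
    _ = μ (t \ s) := (measure_sdiff_null (hs.measure_zero μ)).symm
    _ ≤ μ (Function.support f ∩ t) := measure_mono fun x hx => ⟨hne x hx.1 hx.2, hx.1⟩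

theorem Polynomial.rootMultiplicity_prod_X_sub_C {R : Type*} [CommRing R] [IsDomain R]
    [DecidableEq R] (s : Finset R) (z : R) :
    (∏ ρ ∈ s, (X - C ρ)).rootMultiplicity z = if z ∈ s then 1 else 0 := by
  rw [← count_roots, roots_prod_X_sub_C, Multiset.count_eq_of_nodup s.nodup]
  rfl

noncomputable def posOddRoots (p : ℝ[X]) : Finset ℝ :=
  p.roots.toFinset.filter fun ρ => 0 < ρ ∧ Odd (p.rootMultiplicity ρ)

theorem even_rootMultiplicity_mul_prod_posOddRoots {p : ℝ[X]} (hp : p ≠ 0) {z : ℝ} (hz : 0 < z) :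
    Even ((p * ∏ ρ ∈ posOddRoots p, (X - C ρ)).rootMultiplicity z) := by
  have hprod : ∏ ρ ∈ posOddRoots p, (X - C ρ) ≠ 0 :=
    prod_ne_zero_iff.mpr fun ρ _ => X_sub_C_ne_zero ρ
  rw [rootMultiplicity_mul (mul_ne_zero hp hprod), rootMultiplicity_prod_X_sub_C]
  by_cases hzS : z ∈ posOddRoots p
  · rw [if_pos hzS]
    exact (mem_filter.mp hzS).2.2.add_one
  · rw [if_neg hzS, add_zero, ← Nat.not_odd_iff_even]
    intro hodd
    have hroot : p.IsRoot z := (rootMultiplicity_pos hp).mp hodd.pos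
    exact hzS (mem_filter.mpr ⟨Multiset.mem_toFinset.mpr ((mem_roots hp).mpr hroot), hz, hodd⟩)

theorem pos_and_rootMultiplicity_eq_one_of_natDegree_le_card_posOddRoots {p : ℝ[X]} (hp : p ≠ 0)
    (hdeg : p.natDegree ≤ #(posOddRoots p)) {x : ℝ} (hx : p.IsRoot x) :
    0 < x ∧ p.rootMultiplicity x = 1 := by
  have hcard : p.roots.card ≤ #(posOddRoots p) := (card_roots' p).trans hdeg
  have hS : posOddRoots p = p.roots.toFinset :=
    eq_of_subset_of_card_le (filter_subset _ _) ((Multiset.toFinset_card_le _).trans hcard)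
  have hnodup : p.roots.Nodup := Multiset.toFinset_card_eq_card_iff_nodup.mp
    (le_antisymm (Multiset.toFinset_card_le _) (hS ▸ hcard))
  have hxroots : x ∈ p.roots := (mem_roots hp).mpr hx
  have hxS : x ∈ posOddRoots p := hS ▸ Multiset.mem_toFinset.mpr hxroots
  refine ⟨(mem_filter.mp hxS).2.1, ?_⟩
  rw [← count_roots, Multiset.count_eq_one_of_mem hnodup hxroots]

noncomputable def laWeight (β : ℝ) (r : ℕ) (x : ℝ) : ℝ := x ^ β * exp (-x ^ r)

section

variable {r : ℕ} {β : ℝ}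

theorem add_natCast_div_add_one_pos (hr : 0 < r) (hβ : -1 < β) (k : ℕ) : 0 < (β + k) / r + 1 := by
  have hr' : (1 : ℝ) ≤ r := by exact_mod_cast hr
  have : -1 < (β + k) / r := by
    rw [lt_div_iff₀ (by linarith)]
    nlinarith [(k.cast_nonneg : (0 : ℝ) ≤ k)]
  linarith

theorem pow_mul_laWeight_eq_rpow_mul_exp {x : ℝ} (hx : 0 < x) (m : ℕ) :
    x ^ m * laWeight β r x = x ^ (β + m) * exp (-x ^ (r : ℝ)) := by
  rw [laWeight, rpow_add hx, rpow_natCast, rpow_natCast]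
  ring

theorem integrableOn_pow_mul_laWeight (hr : 0 < r) (hβ : -1 < β) (m : ℕ) :
    IntegrableOn (fun x => x ^ m * laWeight β r x) (Ioi 0) := by
  refine (integrableOn_rpow_mul_exp_neg_rpow ?_ (by exact_mod_cast hr)).congr_fun
    (fun x hx => (pow_mul_laWeight_eq_rpow_mul_exp hx m).symm) measurableSet_Ioi
  linarith [(m.cast_nonneg : (0 : ℝ) ≤ m)]

theorem integral_pow_mul_laWeight (hr : 0 < r) (hβ : -1 < β) (m : ℕ) :
    ∫ x in Ioi 0, x ^ m * laWeight β r x = Gamma ((β + m + 1) / r) / r := by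
  rw [setIntegral_congr_fun measurableSet_Ioi fun x hx => pow_mul_laWeight_eq_rpow_mul_exp hx m,
    integral_rpow_mul_exp_neg_rpow (by exact_mod_cast hr)
      (by linarith [(m.cast_nonneg : (0 : ℝ) ≤ m)])]
  ring

theorem integrableOn_eval_mul_laWeight (hr : 0 < r) (hβ : -1 < β) (P : ℝ[X]) :
    IntegrableOn (fun x => P.eval x * laWeight β r x) (Ioi 0) := by
  simp_rw [eval_eq_sum_range, sum_mul, mul_assoc]
  exact integrable_finsetSum _ fun i _ => (integrableOn_pow_mul_laWeight hr hβ i).const_mul _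

theorem laPolynomial_eval (r n : ℕ) (β x : ℝ) :
    (laPolynomial r n β).eval x = ∑ k ∈ range (n + 1),
      (n.choose k : ℝ) * (-1) ^ (n - k) / Gamma ((β + k) / r + 1) * x ^ k := by
  simp [laPolynomial, eval_finsetSum]

theorem laPolynomial_coeff_self (r n : ℕ) (β : ℝ) :
    (laPolynomial r n β).coeff n = (Gamma ((β + n) / r + 1))⁻¹ := by
  simp [laPolynomial, finsetSum_coeff, coeff_X_pow]

theorem laPolynomial_coeff_self_ne_zero (hr : 0 < r) (hβ : -1 < β) (n : ℕ) :
    (laPolynomial r n β).coeff n ≠ 0 := by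
  rw [laPolynomial_coeff_self]
  exact inv_ne_zero (Gamma_pos_of_pos (add_natCast_div_add_one_pos hr hβ n)).ne'

theorem laPolynomial_ne_zero (hr : 0 < r) (hβ : -1 < β) (n : ℕ) : laPolynomial r n β ≠ 0 :=
  fun h => laPolynomial_coeff_self_ne_zero hr hβ n (by rw [h, coeff_zero])

theorem laPolynomial_natDegree (hr : 0 < r) (hβ : -1 < β) (n : ℕ) :
    (laPolynomial r n β).natDegree = n := by
  refine natDegree_eq_of_le_of_coeff_ne_zero ?_ (laPolynomial_coeff_self_ne_zero hr hβ n)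
  refine natDegree_sum_le_of_forall_le _ _ fun k hk => (natDegree_C_mul_X_pow_le _ _).trans ?_
  exact Nat.lt_succ_iff.mp (mem_range.mp hk)

theorem sum_choose_div_Gamma_mul_Gamma_add_eq_zero (hr : 0 < r) (hβ : -1 < β) {n j : ℕ}
    (hj : j < n) :
    ∑ k ∈ range (n + 1), (n.choose k : ℝ) * (-1) ^ (n - k) / Gamma ((β + k) / r + 1) *
      Gamma ((β + k) / r + 1 + j) = 0 := by
  set P : ℝ[X] := (ascPochhammer ℝ j).comp (C (1 / r : ℝ) * X + C (β / r + 1))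
  have hP : P.natDegree < n := by
    refine (natDegree_comp_le.trans ?_).trans_lt hj
    rw [ascPochhammer_natDegree]
    exact (Nat.mul_le_mul_left _ natDegree_linear_le).trans_eq (mul_one j)
  rw [← P.alternating_sum_choose_mul_eval_eq_zero hP]
  refine sum_congr rfl fun k _ => ?_
  have hG := add_natCast_div_add_one_pos hr hβ k
  have hPk : P.eval (k : ℝ) = (ascPochhammer ℝ j).eval ((β + k) / r + 1) := by
    simp only [P, eval_comp, eval_add, eval_mul, eval_C, eval_X]
    congr 1
    ring
  rw [Gamma_add_nat_eq_mul_ascPochhammer (fun i => by linarith [(i.cast_nonneg : (0 : ℝ) ≤ i)]),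
    hPk, ← mul_assoc, div_mul_cancel₀ _ (Gamma_pos_of_pos hG).ne']
  ring

theorem integral_laPolynomial_mul_pow_mul_laWeight (hr : 0 < r) (hβ : -1 < β) {n j : ℕ}
    (hj : j < n) :
    ∫ x in Ioi 0, (laPolynomial r n β).eval x * x ^ (r * j + (r - 1)) * laWeight β r x = 0 := by
  have hexp : ∀ k : ℕ, (β + ((k + (r * j + (r - 1)) : ℕ) : ℝ) + 1) / r = (β + k) / r + 1 + j := by
    intro k
    have : (r : ℝ) ≠ 0 := by exact_mod_cast hr.ne'
    push_cast [Nat.cast_sub hr]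
    field_simp
    ring
  have hsum : ∀ x : ℝ, (laPolynomial r n β).eval x * x ^ (r * j + (r - 1)) * laWeight β r x =
      ∑ k ∈ range (n + 1), (n.choose k : ℝ) * (-1) ^ (n - k) / Gamma ((β + k) / r + 1) *
        (x ^ (k + (r * j + (r - 1))) * laWeight β r x) := by
    intro x
    simp_rw [laPolynomial_eval, sum_mul, pow_add]
    exact sum_congr rfl fun k _ => by ring
  simp_rw [hsum]
  rw [integral_finsetSum _ fun k _ => (integrableOn_pow_mul_laWeight hr hβ _).const_mul _]
  simp_rw [integral_const_mul, integral_pow_mul_laWeight hr hβ, hexp, mul_div, ← sum_div,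
    sum_choose_div_Gamma_mul_Gamma_add_eq_zero hr hβ hj, zero_div]

theorem integral_laPolynomial_mul_comp_mul_laWeight (hr : 0 < r) (hβ : -1 < β) {n : ℕ}
    {Q : ℝ[X]} (hQ : Q.natDegree < n) :
    ∫ x in Ioi 0, (laPolynomial r n β).eval x * (x ^ (r - 1) * Q.eval (x ^ r)) *
      laWeight β r x = 0 := by
  have hterm : ∀ j, IntegrableOn
      (fun x => (laPolynomial r n β).eval x * x ^ (r * j + (r - 1)) * laWeight β r x) (Ioi 0) := by
    intro j
    refine (integrableOn_eval_mul_laWeight hr hβ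
      (laPolynomial r n β * X ^ (r * j + (r - 1)))).congr_fun (fun x _ => ?_) measurableSet_Ioi
    simp only [eval_mul, eval_pow, eval_X]
  have hsum : ∀ x : ℝ, (laPolynomial r n β).eval x * (x ^ (r - 1) * Q.eval (x ^ r)) *
      laWeight β r x = ∑ j ∈ range (Q.natDegree + 1),
        Q.coeff j * ((laPolynomial r n β).eval x * x ^ (r * j + (r - 1)) * laWeight β r x) := by
    intro x
    rw [eval_eq_sum_range (p := Q), mul_sum, mul_sum, sum_mul]
    exact sum_congr rfl fun j _ => by ring
  simp_rw [hsum]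
  rw [integral_finsetSum _ fun j _ => (hterm j).const_mul _]
  refine sum_eq_zero fun j hj => ?_
  rw [integral_const_mul, integral_laPolynomial_mul_pow_mul_laWeight hr hβ
    ((Nat.lt_succ_iff.mp (mem_range.mp hj)).trans_lt hQ), mul_zero]

theorem card_posOddRoots_ge (hr : 0 < r) (hβ : -1 < β) {p : ℝ[X]} (hp : p ≠ 0)
    {n : ℕ} (horth : ∀ Q : ℝ[X], Q.natDegree < n →
      ∫ x in Ioi 0, p.eval x * (x ^ (r - 1) * Q.eval (x ^ r)) * laWeight β r x = 0) :
    n ≤ #(posOddRoots p) := by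
  set S := posOddRoots p
  by_contra! hS
  set Q : ℝ[X] := ∏ ρ ∈ S, (X - C (ρ ^ r))
  have hQ : Q.natDegree < n := by
    rwa [natDegree_prod _ _ fun ρ _ => X_sub_C_ne_zero _, sum_congr rfl fun ρ _ =>
      natDegree_X_sub_C (ρ ^ r), sum_const, smul_eq_mul, mul_one]
  set g : ℝ[X] := p * ∏ ρ ∈ S, (X - C ρ)
  have hg0 : g ≠ 0 := mul_ne_zero hp (prod_ne_zero_iff.mpr fun ρ _ => X_sub_C_ne_zero ρ)
  set f : ℝ → ℝ := fun x => p.eval x * (x ^ (r - 1) * Q.eval (x ^ r)) * laWeight β r x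
  set B : ℝ → ℝ := fun x =>
    x ^ (r - 1) * (∏ ρ ∈ S, ∑ i ∈ range r, x ^ i * ρ ^ (r - 1 - i)) * laWeight β r x
  -- `x ^ r - ρ ^ r = (x - ρ) * ∑ i < r, x ^ i * ρ ^ (r - 1 - i)` and the sum is positive
  have hfg : ∀ x, f x = g.eval x * B x := by
    intro x
    simp only [f, g, B, Q, eval_mul, eval_prod, eval_sub, eval_X, eval_C,
      ← geom_sum₂_mul, prod_mul_distrib]
    ring
  have hB : ∀ x, 0 < x → 0 < B x := by
    intro x hx
    have hS_pos : ∀ ρ ∈ S, 0 < ρ := fun ρ hρ => (mem_filter.mp hρ).2.1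
    have : 0 < ∏ ρ ∈ S, ∑ i ∈ range r, x ^ i * ρ ^ (r - 1 - i) := prod_pos fun ρ hρ =>
      sum_pos (fun i _ => by have := hS_pos ρ hρ; positivity) (nonempty_range_iff.mpr hr.ne')
    have : 0 < laWeight β r x := mul_pos (rpow_pos_of_pos hx β) (exp_pos _)
    positivity
  have hroots : {x | g.IsRoot x}.Finite := finite_setOfPred_isRoot hg0
  obtain ⟨x₀, hx₀, hgx₀⟩ := ((Ioi_infinite 0).sdiff hroots).nonempty
  have hint : IntegrableOn f (Ioi 0) :=
    (integrableOn_eval_mul_laWeight hr hβ (p * (X ^ (r - 1) * Q.comp (X ^ r)))).congr_fun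
      (fun x _ => by simp only [f, eval_mul, eval_pow, eval_X, eval_comp]) measurableSet_Ioi
  -- after multiplying by `g x₀`, the integrand is nonnegative and vanishes only at roots of `g`
  have hpos : 0 < ∫ x in Ioi 0, g.eval x₀ * f x := by
    refine setIntegral_pos_of_nonneg_of_ne_zero_off_countable measurableSet_Ioi (by simp)
      (hint.const_mul _) (fun x hx => ?_) hroots.countable (fun x hx hgx => ?_)
    · rw [hfg, ← mul_assoc]
      exact mul_nonneg (eval_mul_eval_nonneg_of_even_rootMultiplicity
        (fun z hz => even_rootMultiplicity_mul_prod_posOddRoots hp hz) hx₀ hx) (hB x hx).le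
    · rw [hfg]
      exact mul_ne_zero hgx₀ (mul_ne_zero hgx (hB x hx).ne')
  rw [integral_const_mul, horth Q hQ, mul_zero] at hpos
  exact hpos.false

end

theorem stmt_8 (r n : ℕ) (hr : 1 ≤ r) (β : ℝ) (hβ : β > -1) (x : ℝ)
    (hx : (laPolynomial r n β).IsRoot x) :
    x ∈ Set.Ioi (0 : ℝ) ∧ (laPolynomial r n β).rootMultiplicity x = 1 := by
  have hp := laPolynomial_ne_zero hr hβ n
  refine pos_and_rootMultiplicity_eq_one_of_natDegree_le_card_posOddRoots hp ?_ hx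
  rw [laPolynomial_natDegree hr hβ n]
  exact card_posOddRoots_ge hr hβ hp fun Q hQ =>
    integral_laPolynomial_mul_comp_mul_laWeight hr hβ hQ
end

section
/- Let $r \ge 1$, $\beta > -1$, $\omega = e^{2\pi i/r}$, and for the diagonal multi-index $\vec{n} = (n+1,\dots,n+1)$ define $A_{\vec{n},j}(x;\beta) = \frac{r^n}{n!} p_n(\omega^{-j+1} x;\beta)$ for $1 \le j \le r$, with $p_n(x;\beta) = \sum_{k=0}^n \binom{n}{k} \frac{(-1)^{n-k}}{\Gamma(\frac{\beta+k}{r}+1)} x^k$. Then for every integer $k$ with $0 \le k \le r(n+1)-2$, $\sum_{j=1}^r \int_0^{\omega^{j-1}\infty} x^k A_{\vec{n},j}(x;\beta)\, |x|^\beta e^{-x^r}\, dx = 0$, and for $k = r(n+1)-1$ this sum equals $1$. -/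
open Finset in
/-- The polynomial `p_n(z; β)` (complex variable) for the Laguerre-Angelesco
polynomials on an `r`-star. -/
noncomputable def laPolyC (r n : ℕ) (β : ℝ) (z : ℂ) : ℂ :=
  ∑ k ∈ Finset.range (n + 1),
    ((n.choose k : ℂ) * (-1) ^ (n - k) / (Real.Gamma ((β + k) / r + 1) : ℂ)) * z ^ k

/-- The type I Laguerre-Angelesco polynomial `A_{𝐧,j}` on the diagonal
`𝐧 = (n+1,…,n+1)`. -/
noncomputable def laTypeI (r n : ℕ) (β : ℝ) (ω : ℂ) (j : ℕ) (z : ℂ) : ℂ :=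
  ((r : ℂ) ^ n / (n.factorial : ℂ)) * laPolyC r n β ((ω ^ (j - 1))⁻¹ * z)

/-!
Put `x = ω^(j-1) t` on the `j`-th ray. Then `A_{n,j}(x) = rⁿ/n! · p_n(t)`, so the `j`-th integral is
`(ω^(k+1))^(j-1)` times one real moment `M_k = ∫₀^∞ t^k p_n(t) t^β e^{-t^r} dt`, and summing the
roots of unity leaves `r · rⁿ/n! · M_k` if `r ∣ k + 1` and `0` otherwise.

For `k + 1 = r m`, integrating term by term gives
`M_k = r⁻¹ ∑ᵢ (-1)^(n-i) C(n,i) Γ((β+i)/r + m) / Γ((β+i)/r + 1)`. The Gamma ratio is a polynomial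
of degree `m - 1` in `i` (a Pochhammer symbol), and the alternating binomial sum is its `n`-th
forward difference, i.e. `n!` times its coefficient of `iⁿ`. Hence `M_k = 0` for `m ≤ n` and
`M_k = n! / r^(n+1)` for `m = n + 1`.
-/

open Finset Polynomial Nat MeasureTheory Set Real

theorem Polynomial.sum_range_neg_one_pow_mul_choose_mul_eval {R : Type*} [CommRing R]
    (P : R[X]) {n : ℕ} (hP : P.natDegree ≤ n) :
    ∑ i ∈ range (n + 1), (-1) ^ (n - i) * n.choose i * P.eval (i : R) = n ! * P.coeff n := by
  have hΔ : (fwdDiff 1)^[n] P.eval 0 = n ! * P.coeff n := by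
    rcases hP.lt_or_eq with hlt | rfl
    · rw [fwdDiff_iter_eq_zero_of_degree_lt hlt, coeff_eq_zero_of_natDegree_lt hlt]
      simp
    · rw [fwdDiff_iter_degree_eq_factorial, leadingCoeff]
      simp [mul_comm]
  rw [← hΔ, fwdDiff_iter_eq_sum_shift]
  simp

theorem Real.Gamma_add_nat_eq_mul_ascPochhammer_s11 {x : ℝ} (hx : 0 < x) (d : ℕ) :
    Real.Gamma (x + d) = Real.Gamma x * (ascPochhammer ℝ d).eval x := by
  induction d with
  | zero => simp
  | succ d ih =>
    rw [Nat.cast_succ, ← add_assoc, Real.Gamma_add_one (by positivity), ih,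
      ascPochhammer_succ_eval]
    ring

/-- As a function of `x`, this is `Γ((β + x) / r + 1 + m) / Γ((β + x) / r + 1)`. -/
noncomputable def gammaRatioPoly (r : ℕ) (β : ℝ) (m : ℕ) : ℝ[X] :=
  (ascPochhammer ℝ m).comp (C (r : ℝ)⁻¹ * X + C (β / r + 1))

theorem gammaRatioPoly_eval (r : ℕ) (β : ℝ) (m : ℕ) (x : ℝ) :
    (gammaRatioPoly r β m).eval x = (ascPochhammer ℝ m).eval ((β + x) / r + 1) := by
  simp only [gammaRatioPoly, eval_comp, eval_add, eval_mul, eval_C, eval_X]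
  ring_nf

theorem natDegree_gammaRatioPoly_le (r : ℕ) (β : ℝ) (m : ℕ) :
    (gammaRatioPoly r β m).natDegree ≤ m :=
  natDegree_comp_le.trans <| by
    rw [ascPochhammer_natDegree]
    exact (Nat.mul_le_mul_left m natDegree_linear_le).trans (mul_one m).le

theorem coeff_gammaRatioPoly_self {r : ℕ} (hr : r ≠ 0) (β : ℝ) (m : ℕ) :
    (gammaRatioPoly r β m).coeff m = (r : ℝ)⁻¹ ^ m := by
  have hr' : (r : ℝ)⁻¹ ≠ 0 := by positivity
  have h := coeff_comp_degree_mul_degree (p := ascPochhammer ℝ m)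
    (q := C (r : ℝ)⁻¹ * X + C (β / r + 1)) (by rw [natDegree_linear hr']; exact one_ne_zero)
  rw [natDegree_linear hr', ascPochhammer_natDegree, mul_one,
    (monic_ascPochhammer (S := ℝ) m).leadingCoeff, leadingCoeff_linear hr', one_mul] at h
  exact h

theorem integrableOn_pow_mul_rpow_mul_exp_neg_pow {r : ℕ} (hr : 0 < r) {β : ℝ} (hβ : -1 < β)
    (N : ℕ) : IntegrableOn (fun t : ℝ => t ^ N * t ^ β * exp (-t ^ r)) (Ioi 0) := by
  refine (integrableOn_rpow_mul_exp_neg_rpow (s := N + β) (p := r)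
    (by linarith [N.cast_nonneg (α := ℝ)]) (by positivity)).congr_fun
    (fun t (ht : 0 < t) => ?_) measurableSet_Ioi
  dsimp only
  rw [rpow_add ht, rpow_natCast, rpow_natCast]

theorem integral_pow_mul_rpow_mul_exp_neg_pow {r : ℕ} (hr : 0 < r) {β : ℝ} (hβ : -1 < β)
    {m : ℕ} (hm : 0 < m) (i : ℕ) :
    (∫ t in Ioi 0, t ^ (r * m - 1 + i) * t ^ β * exp (-t ^ r)) / Gamma ((β + i) / r + 1) =
      (gammaRatioPoly r β (m - 1)).eval (i : ℝ) / r := by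
  have hr' : (1 : ℝ) ≤ r := by exact_mod_cast hr
  have hpos : 0 < (β + i) / r + 1 := by
    have : -1 < (β + i) / r := by
      rw [lt_div_iff₀ (by positivity)]
      linarith [i.cast_nonneg (α := ℝ)]
    linarith
  have hexp : (((r * m - 1 + i : ℕ) : ℝ) + β + 1) / r = (β + i) / r + 1 + (m - 1 : ℕ) := by
    have hrm : 1 ≤ r * m := Nat.one_le_iff_ne_zero.mpr (by positivity)
    rw [Nat.cast_add, Nat.cast_sub hrm, Nat.cast_sub hm, Nat.cast_mul]
    field_simp
    ring
  have hrpow : ∀ t ∈ Ioi (0 : ℝ), t ^ (r * m - 1 + i) * t ^ β * exp (-t ^ r) =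
      t ^ ((r * m - 1 + i : ℕ) + β) * exp (-t ^ (r : ℝ)) := fun t ht => by
    rw [rpow_add ht, rpow_natCast, rpow_natCast]
  rw [setIntegral_congr_fun measurableSet_Ioi hrpow, integral_rpow_mul_exp_neg_rpow
      (by positivity) (by linarith [(r * m - 1 + i : ℕ).cast_nonneg (α := ℝ)]),
    hexp, Gamma_add_nat_eq_mul_ascPochhammer_s11 hpos, gammaRatioPoly_eval]
  have hΓ := (Gamma_pos_of_pos hpos).ne'
  generalize Gamma ((β + i) / r + 1) = G at hΓ ⊢
  field_simp

/-- `p_n(t; β)` at real `t`. -/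
noncomputable def laPoly (r n : ℕ) (β : ℝ) (t : ℝ) : ℝ :=
  ∑ i ∈ range (n + 1), (n.choose i * (-1) ^ (n - i) / Gamma ((β + i) / r + 1)) * t ^ i

theorem integral_pow_mul_laPoly {r n : ℕ} (hr : 0 < r) {β : ℝ} (hβ : -1 < β) {m : ℕ}
    (hm : 0 < m) (hmn : m ≤ n + 1) :
    ∫ t in Ioi 0, t ^ (r * m - 1) * laPoly r n β t * t ^ β * exp (-t ^ r) =
      n ! / r * (gammaRatioPoly r β (m - 1)).coeff n := by
  have hexpand : ∀ t : ℝ, t ^ (r * m - 1) * laPoly r n β t * t ^ β * exp (-t ^ r) =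
      ∑ i ∈ range (n + 1), (n.choose i * (-1) ^ (n - i) / Gamma ((β + i) / r + 1)) *
        (t ^ (r * m - 1 + i) * t ^ β * exp (-t ^ r)) := by
    intro t
    simp only [laPoly, mul_sum, sum_mul, pow_add]
    exact sum_congr rfl fun i _ => by ring
  simp_rw [hexpand]
  rw [integral_finsetSum _ fun i _ =>
      (integrableOn_pow_mul_rpow_mul_exp_neg_pow hr hβ _).integrable.const_mul _]
  simp_rw [integral_const_mul, div_mul_eq_mul_div, mul_div_assoc,
    integral_pow_mul_rpow_mul_exp_neg_pow hr hβ hm, ← mul_div_assoc, ← sum_div]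
  rw [← sum_range_neg_one_pow_mul_choose_mul_eval _
    ((natDegree_gammaRatioPoly_le r β (m - 1)).trans (by omega))]
  congr 1
  exact sum_congr rfl fun i _ => by ring

theorem integral_pow_mul_laPoly_eq_zero {r n : ℕ} (hr : 0 < r) {β : ℝ} (hβ : -1 < β) {m : ℕ}
    (hm : 0 < m) (hmn : m ≤ n) :
    ∫ t in Ioi 0, t ^ (r * m - 1) * laPoly r n β t * t ^ β * exp (-t ^ r) = 0 := by
  rw [integral_pow_mul_laPoly hr hβ hm (by omega), coeff_eq_zero_of_natDegree_lt
    ((natDegree_gammaRatioPoly_le r β _).trans_lt (by omega)), mul_zero]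

theorem integral_pow_mul_laPoly_self {r n : ℕ} (hr : 0 < r) {β : ℝ} (hβ : -1 < β) :
    ∫ t in Ioi 0, t ^ (r * (n + 1) - 1) * laPoly r n β t * t ^ β * exp (-t ^ r) =
      n ! / r ^ (n + 1) := by
  rw [integral_pow_mul_laPoly hr hβ n.succ_pos le_rfl, Nat.succ_sub_one,
    coeff_gammaRatioPoly_self hr.ne', inv_pow]
  ring

theorem laTypeI_pow_mul_ofReal {r n : ℕ} {β : ℝ} {ω : ℂ} (hω : ω ≠ 0) (j : ℕ) (t : ℝ) :
    laTypeI r n β ω j (ω ^ (j - 1) * t) = ((r ^ n / n ! * laPoly r n β t : ℝ) : ℂ) := by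
  rw [laTypeI, inv_mul_cancel_left₀ (pow_ne_zero _ hω), laPolyC, laPoly]
  push_cast
  rfl

theorem sum_Icc_integral_laTypeI {r n : ℕ} {β : ℝ} {ω : ℂ} (hω : ω ≠ 0) (k : ℕ) :
    ∑ j ∈ Icc 1 r, ∫ t in Ioi (0 : ℝ),
        (ω ^ (j - 1)) ^ (k + 1) * (t : ℂ) ^ k * laTypeI r n β ω j (ω ^ (j - 1) * t) *
          ((t ^ β : ℝ) : ℂ) * ((Real.exp (-(t ^ r)) : ℝ) : ℂ) =
      (∑ i ∈ range r, (ω ^ (k + 1)) ^ i) *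
        ((r ^ n / n ! * ∫ t in Ioi 0, t ^ k * laPoly r n β t * t ^ β * exp (-t ^ r) : ℝ) : ℂ) := by
  have hray : ∀ j, ∫ t in Ioi (0 : ℝ),
        (ω ^ (j - 1)) ^ (k + 1) * (t : ℂ) ^ k * laTypeI r n β ω j (ω ^ (j - 1) * t) *
          ((t ^ β : ℝ) : ℂ) * ((Real.exp (-(t ^ r)) : ℝ) : ℂ) =
      (ω ^ (k + 1)) ^ (j - 1) *
        ((r ^ n / n ! * ∫ t in Ioi 0, t ^ k * laPoly r n β t * t ^ β * exp (-t ^ r) : ℝ) : ℂ) := by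
    intro j
    rw [← integral_const_mul, ← integral_complex_ofReal, ← integral_const_mul]
    refine integral_congr_ae (Filter.Eventually.of_forall fun t => ?_)
    dsimp only
    rw [laTypeI_pow_mul_ofReal hω]
    push_cast
    ring
  rw [sum_congr rfl fun j _ => hray j, ← sum_mul, ← Finset.Ico_add_one_right_eq_Icc,
    sum_Ico_eq_sum_range]
  simp

theorem IsPrimitiveRoot.geom_sum_pow_eq_ite {R : Type*} [CommRing R] [IsDomain R] {ζ : R} {r : ℕ}
    (hζ : IsPrimitiveRoot ζ r) (k : ℕ) :
    ∑ i ∈ range r, (ζ ^ k) ^ i = if r ∣ k then (r : R) else 0 := by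
  split_ifs with hdvd
  · simp [(hζ.pow_eq_one_iff_dvd k).mpr hdvd]
  · have hne : ζ ^ k - 1 ≠ 0 := sub_ne_zero.mpr fun h => hdvd ((hζ.pow_eq_one_iff_dvd k).mp h)
    refine (_root_.mul_eq_zero.mp ?_).resolve_left hne
    rw [mul_geom_sum, ← pow_mul, mul_comm, pow_mul, hζ.pow_eq_one, one_pow, sub_self]

theorem stmt_11 (r n : ℕ) (hr : 1 ≤ r) (β : ℝ) (hβ : β > -1)
    (ω : ℂ) (hω : ω = Complex.exp (2 * Real.pi * Complex.I / r)) :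
    (∀ k : ℕ, k + 2 ≤ r * (n + 1) →
      ∑ j ∈ Finset.Icc 1 r,
        ∫ t in Set.Ioi (0 : ℝ),
          (ω ^ (j - 1)) ^ (k + 1) * (t : ℂ) ^ k * laTypeI r n β ω j (ω ^ (j - 1) * t) *
            ((t ^ β : ℝ) : ℂ) * ((Real.exp (-(t ^ r)) : ℝ) : ℂ) = 0) ∧
    (∑ j ∈ Finset.Icc 1 r,
        ∫ t in Set.Ioi (0 : ℝ),
          (ω ^ (j - 1)) ^ (r * (n + 1) - 1 + 1) * (t : ℂ) ^ (r * (n + 1) - 1) *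
            laTypeI r n β ω j (ω ^ (j - 1) * t) *
            ((t ^ β : ℝ) : ℂ) * ((Real.exp (-(t ^ r)) : ℝ) : ℂ) = 1) := by
  have hprim : IsPrimitiveRoot ω r := hω ▸ Complex.isPrimitiveRoot_exp r (by omega)
  have hω0 : ω ≠ 0 := hprim.ne_zero (by omega)
  refine ⟨fun k hk => ?_, ?_⟩
  · rw [sum_Icc_integral_laTypeI hω0, hprim.geom_sum_pow_eq_ite]
    split_ifs with hdvd
    · obtain ⟨m, hm⟩ := hdvd
      have hmn : m ≤ n := by nlinarith
      rw [show k = r * m - 1 by omega, integral_pow_mul_laPoly_eq_zero hr hβ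
        (Nat.pos_of_ne_zero (by rintro rfl; simp at hm)) hmn]
      simp
    · exact zero_mul _
  · have hk : r * (n + 1) - 1 + 1 = r * (n + 1) := Nat.sub_add_cancel (by nlinarith)
    rw [sum_Icc_integral_laTypeI hω0, hprim.geom_sum_pow_eq_ite, hk, if_pos (dvd_mul_right r _),
      integral_pow_mul_laPoly_self hr hβ]
    have hr0 : (r : ℂ) ≠ 0 := by exact_mod_cast (by omega : r ≠ 0)
    have hfact : (n ! : ℂ) ≠ 0 := by exact_mod_cast n.factorial_ne_zero
    push_cast
    field_simp
    ring
end

section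
/- Let $r \ge 1$, $\beta > -1$, and let $L_{\vec{n}}(x;\beta)$ be defined by the Rodrigues formula $x^\beta e^{-x^r} L_{\vec{n}}(x;\beta) = \frac{(-1)^n}{r^n} \frac{d^n}{dx^n}[x^{\beta+n} e^{-x^r}]$. Then for every integer $k$ with $0 \le k \le n-1$, $\int_0^\infty x^k L_{\vec{n}}(x;\beta)\, x^\beta e^{-x^r}\, dx = 0$. -/
/-!
For `x > 0` the `j`-th derivative of `x ^ a * exp (-x ^ r)` is `x ^ (a - j) * P_j x * exp (-x ^ r)`
for a polynomial `P_j`. Integrating `x ^ k` against the `(j + 1)`-st derivative by parts gives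
`-k` times the integral of `x ^ (k - 1)` against the `j`-th one: the boundary term vanishes at `0`
as long as `j < a`, and at `∞` because `exp (-x ^ r)` beats every power. With `a = β + n` and
`k < n`, the `(k + 1)`-st such step brings down the factor `0`.
-/

open Real MeasureTheory Set Filter Polynomial Topology

noncomputable def rpowPolyExp (r : ℕ) (c : ℝ) (q : ℝ[X]) (x : ℝ) : ℝ :=
  x ^ c * q.eval x * exp (-(x ^ r))

section rpowPolyExp

variable {r : ℕ} {c : ℝ}

lemma tendsto_rpow_mul_exp_neg_pow_atTop (s : ℝ) (hr : 0 < r) :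
    Tendsto (fun x : ℝ => x ^ s * exp (-(x ^ r))) atTop (𝓝 0) := by
  have hlin := tendsto_rpow_mul_exp_neg_mul_atTop_nhds_zero s 1 one_pos
  refine squeeze_zero' ?_ ?_ (by simpa using hlin)
  · filter_upwards [eventually_ge_atTop 0] with x hx
    positivity
  · filter_upwards [eventually_ge_atTop 1] with x hx
    gcongr
    exact le_self_pow₀ hx hr.ne'

lemma rpowPolyExp_eqOn_sum (r : ℕ) (c : ℝ) (q : ℝ[X]) :
    EqOn (rpowPolyExp r c q) (fun x => ∑ i ∈ Finset.range (q.natDegree + 1),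
      q.coeff i * (x ^ (c + i) * exp (-(x ^ r)))) (Ioi 0) := by
  intro x hx
  simp only [rpowPolyExp, eval_eq_sum_range, Finset.sum_mul, Finset.mul_sum]
  refine Finset.sum_congr rfl fun i _ => ?_
  rw [rpow_add hx, rpow_natCast]
  ring

lemma tendsto_rpowPolyExp_atTop (q : ℝ[X]) (hr : 0 < r) :
    Tendsto (rpowPolyExp r c q) atTop (𝓝 0) := by
  have hsum := tendsto_finsetSum (Finset.range (q.natDegree + 1)) fun i _ =>
    (tendsto_rpow_mul_exp_neg_pow_atTop (c + i) hr).const_mul (q.coeff i)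
  simp only [mul_zero, Finset.sum_const_zero] at hsum
  refine hsum.congr' ?_
  filter_upwards [eventually_gt_atTop 0] with x hx
  exact (rpowPolyExp_eqOn_sum r c q hx).symm

lemma integrableOn_rpowPolyExp (q : ℝ[X]) (hc : -1 < c) (hr : 0 < r) :
    IntegrableOn (rpowPolyExp r c q) (Ioi 0) := by
  rw [integrableOn_congr_fun (rpowPolyExp_eqOn_sum r c q) measurableSet_Ioi]
  refine integrable_finsetSum _ fun i _ => Integrable.const_mul ?_ _
  have hci : -1 < c + i := by linarith [(i.cast_nonneg : (0 : ℝ) ≤ i)]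
  simpa only [rpow_natCast, IntegrableOn] using
    integrableOn_rpow_mul_exp_neg_rpow hci (Nat.cast_pos.mpr hr)

lemma continuous_rpowPolyExp (r : ℕ) (q : ℝ[X]) (hc : 0 ≤ c) :
    Continuous (rpowPolyExp r c q) := by
  unfold rpowPolyExp
  have := continuous_rpow_const hc
  fun_prop

lemma rpowPolyExp_zero (r : ℕ) (q : ℝ[X]) (hc : 0 < c) : rpowPolyExp r c q 0 = 0 := by
  simp [rpowPolyExp, zero_rpow hc.ne']

lemma pow_mul_rpowPolyExp (r k : ℕ) (c : ℝ) (q : ℝ[X]) (x : ℝ) :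
    x ^ k * rpowPolyExp r c q x = rpowPolyExp r c (X ^ k * q) x := by
  simp only [rpowPolyExp, eval_mul, eval_pow, eval_X]
  ring

end rpowPolyExp

-- `P_j` with `d^j/dx^j [x^a e^{-x^r}] = x^(a-j) P_j(x) e^{-x^r}` for `x > 0`; differentiating
-- once more gives the recursion.
noncomputable def rodriguesPoly (a : ℝ) (r : ℕ) : ℕ → ℝ[X]
  | 0 => 1
  | j + 1 => C (a - j) * rodriguesPoly a r j + X * derivative (rodriguesPoly a r j)
      - C (r : ℝ) * X ^ r * rodriguesPoly a r j

noncomputable def rodriguesTerm (a : ℝ) (r j : ℕ) : ℝ → ℝ :=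
  rpowPolyExp r (a - j) (rodriguesPoly a r j)

section rodriguesTerm

variable {a : ℝ} {r : ℕ}

lemma hasDerivAt_rodriguesTerm (j : ℕ) {x : ℝ} (hx : 0 < x) :
    HasDerivAt (rodriguesTerm a r j) (rodriguesTerm a r (j + 1) x) x := by
  have hpow : HasDerivAt (fun t : ℝ => t ^ (a - j)) ((a - j) * x ^ (a - j - 1)) x :=
    hasDerivAt_rpow_const (Or.inl hx.ne')
  have hexp : HasDerivAt (fun t : ℝ => exp (-(t ^ r))) (exp (-(x ^ r)) * -(r * x ^ (r - 1))) x :=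
    (hasDerivAt_pow r x).neg.exp
  refine ((hpow.mul ((rodriguesPoly a r j).hasDerivAt x)).mul hexp).congr_deriv ?_
  have hxa : x ^ (a - j) = x ^ (a - j - 1) * x := by rw [← rpow_add_one hx.ne', sub_add_cancel]
  have hxr : (r : ℝ) * x ^ (r - 1) * x = r * x ^ r := by
    rcases r with _ | r
    · simp
    · rw [mul_assoc, ← pow_succ, Nat.add_sub_cancel]
  simp only [rodriguesTerm, rpowPolyExp, rodriguesPoly, eval_sub, eval_add, eval_mul, eval_C,
    eval_X, eval_pow, Nat.cast_succ, sub_add_eq_sub_sub, Pi.mul_apply]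
  rw [hxa]
  linear_combination -(x ^ (a - j - 1) * (rodriguesPoly a r j).eval x * exp (-(x ^ r)) * hxr)

lemma iteratedDeriv_rpow_mul_exp_neg_pow (j : ℕ) {x : ℝ} (hx : 0 < x) :
    iteratedDeriv j (fun t : ℝ => t ^ a * exp (-(t ^ r))) x = rodriguesTerm a r j x := by
  induction j generalizing x with
  | zero => simp [rodriguesTerm, rpowPolyExp, rodriguesPoly]
  | succ j ih =>
    have hnhds : iteratedDeriv j (fun t : ℝ => t ^ a * exp (-(t ^ r)))
        =ᶠ[𝓝 x] rodriguesTerm a r j :=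
      eventually_of_mem (Ioi_mem_nhds hx) fun y hy => ih hy
    rw [iteratedDeriv_succ, hnhds.deriv_eq, (hasDerivAt_rodriguesTerm j hx).deriv]

lemma integrableOn_pow_mul_rodriguesTerm (hr : 0 < r) {j : ℕ} (hj : (j : ℝ) < a + 1) (k : ℕ) :
    IntegrableOn (fun x => x ^ k * rodriguesTerm a r j x) (Ioi 0) := by
  simp only [rodriguesTerm, pow_mul_rpowPolyExp]
  exact integrableOn_rpowPolyExp _ (by linarith) hr

lemma integral_pow_mul_rodriguesTerm_succ (hr : 0 < r) {j : ℕ} (hj : (j : ℝ) < a) (k : ℕ) :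
    ∫ x in Ioi 0, x ^ k * rodriguesTerm a r (j + 1) x
      = -k * ∫ x in Ioi 0, x ^ (k - 1) * rodriguesTerm a r j x := by
  have hint₁ := integrableOn_pow_mul_rodriguesTerm (j := j) hr (by linarith) (k - 1)
  have hint₂ := integrableOn_pow_mul_rodriguesTerm (j := j + 1) hr (by push_cast; linarith) k
  have hderiv : ∀ x ∈ Ioi (0 : ℝ), HasDerivAt (fun x => x ^ k * rodriguesTerm a r j x)
      (k * (x ^ (k - 1) * rodriguesTerm a r j x) + x ^ k * rodriguesTerm a r (j + 1) x) x :=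
    fun x hx => ((hasDerivAt_pow k x).mul (hasDerivAt_rodriguesTerm j hx)).congr_deriv (by ring)
  have hcont : Continuous fun x => x ^ k * rodriguesTerm a r j x := by
    simp only [rodriguesTerm, pow_mul_rpowPolyExp]
    exact continuous_rpowPolyExp r _ (by linarith)
  have hlim : Tendsto (fun x => x ^ k * rodriguesTerm a r j x) atTop (𝓝 0) := by
    simp only [rodriguesTerm, pow_mul_rpowPolyExp]
    exact tendsto_rpowPolyExp_atTop _ hr
  have hftc := integral_Ioi_of_hasDerivAt_of_tendsto hcont.continuousWithinAt hderiv
    ((hint₁.const_mul _).add hint₂) hlim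
  have hzero : rodriguesTerm a r j 0 = 0 := rpowPolyExp_zero r _ (by linarith)
  rw [integral_add (hint₁.const_mul _) hint₂, integral_const_mul, hzero, mul_zero,
    sub_zero] at hftc
  linarith

lemma integral_pow_mul_rodriguesTerm_eq_zero (hr : 0 < r) {j k : ℕ} (hj : (j : ℝ) < a + 1)
    (hkj : k < j) : ∫ x in Ioi 0, x ^ k * rodriguesTerm a r j x = 0 := by
  induction k generalizing j with
  | zero =>
    obtain ⟨i, rfl⟩ : ∃ i, j = i + 1 := ⟨j - 1, by omega⟩
    rw [integral_pow_mul_rodriguesTerm_succ hr (by push_cast at hj; linarith), Nat.cast_zero,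
      neg_zero, zero_mul]
  | succ k ih =>
    obtain ⟨i, rfl⟩ : ∃ i, j = i + 1 := ⟨j - 1, by omega⟩
    rw [integral_pow_mul_rodriguesTerm_succ hr (by push_cast at hj; linarith),
      Nat.add_sub_cancel, ih (by push_cast at hj; linarith) (by omega), mul_zero]

end rodriguesTerm

theorem stmt_13 (r n : ℕ) (hr : 1 ≤ r) (β : ℝ) (hβ : β > -1) (L : ℝ → ℝ)
    (hL : ∀ x : ℝ, 0 < x →
      x ^ β * Real.exp (-(x ^ r)) * L x
        = ((-1 : ℝ) ^ n / r ^ n) *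
            iteratedDeriv n (fun t : ℝ => t ^ (β + n) * Real.exp (-(t ^ r))) x) :
    ∀ k : ℕ, k < n →
      ∫ x in Set.Ioi (0 : ℝ), x ^ k * L x * x ^ β * Real.exp (-(x ^ r)) = 0 := by
  intro k hk
  have hweight : EqOn (fun x => x ^ k * L x * x ^ β * exp (-(x ^ r)))
      (fun x => (-1) ^ n / r ^ n * (x ^ k * rodriguesTerm (β + n) r n x)) (Ioi 0) := by
    intro x hx
    dsimp only
    rw [← iteratedDeriv_rpow_mul_exp_neg_pow n hx, mul_left_comm, ← hL x hx]
    ring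
  rw [setIntegral_congr_fun measurableSet_Ioi hweight, integral_const_mul,
    integral_pow_mul_rodriguesTerm_eq_zero hr (by linarith) hk, mul_zero]
end
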